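/- Let A ∈ ℂ^{m×N} with rank(A) ≥ 1 and m < N, with norm-induced metrics on ℂ^N and ℂ^m. Let δ ≤ 1/5. There exists a finite set M₁ ⊂ ℂ^N contained in the closed unit ball and a subset T ⊂ M₁ such that: (a) the optimality constant c_opt(A, M₁) := inf over all maps φ : A(M₁) → ℂ^N of sup_{x ∈ M₁} ‖φ(Ax) − x‖ satisfies c_opt(A, M₁) ≤ 1/4; but (b) every map Ψ : A(M₁) → ℂ^N satisfying ‖Ψ(Ax) − x‖ ≤ δ for all x ∈ T satisfies sup_{x ∈ M₁} ‖Ψ(Ax) − x‖ ≥ 3/10. In particular, no map performing δ-well on the training set T is an optimal map for (A, M₁). -/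

import Mathlib

/-
Since `m < N`, the matrix `A` has a kernel vector `z` with `‖z‖ = 1/2`. On `M₁ = {0, z}` the
measurements `A 0 = A z` coincide, so the constant map to the midpoint `z / 2` has error `1/4`,
while any map that reconstructs `0 ∈ T` up to `δ` errs at `z` by at least `‖z‖ - δ ≥ 3/10`.
-/

namespace Seminorm

variable {𝕜 E : Type*} [RCLike 𝕜] [AddCommGroup E] [Module 𝕜 E] (p : Seminorm 𝕜 E)

theorem exists_smul_eq_of_ne_zero {x : E} (hx : p x ≠ 0) {r : ℝ} (hr : 0 ≤ r) :
    ∃ c : 𝕜, p (c • x) = r :=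
  ⟨((r / p x : ℝ) : 𝕜), by
    rw [map_smul_eq_mul, RCLike.norm_ofReal, abs_of_nonneg (div_nonneg hr (apply_nonneg p x)),
      div_mul_cancel₀ r hx]⟩

theorem map_half_smul_sub_of_mem_pair {z x : E} (hx : x ∈ ({0, z} : Set E)) :
    p ((2⁻¹ : 𝕜) • z - x) = p z / 2 := by
  have hhalf : ‖(2⁻¹ : 𝕜)‖ = 2⁻¹ := by simp
  rcases hx with rfl | rfl
  · rw [sub_zero, map_smul_eq_mul, hhalf, inv_mul_eq_div]
  · rw [show (2⁻¹ : 𝕜) • x - x = -((2⁻¹ : 𝕜) • x) by module, map_neg_eq_map, map_smul_eq_mul,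
      hhalf, inv_mul_eq_div]

theorem sub_map_sub_le_map_sub_of_eq {F : Type*} (Ψ : F → E) (f : E → F) {z : E}
    (hz : f z = f 0) : p z - p (Ψ (f 0) - 0) ≤ p (Ψ (f z) - z) := by
  rw [hz, sub_zero, map_sub_rev p]
  linarith [le_map_add_map_sub p z (Ψ (f 0))]

end Seminorm

theorem LinearMap.exists_mem_ker_ne_zero_of_finrank_lt {K V W : Type*} [DivisionRing K]
    [AddCommGroup V] [Module K V] [AddCommGroup W] [Module K W] [FiniteDimensional K V]
    [FiniteDimensional K W] {f : V →ₗ[K] W} (h : Module.finrank K W < Module.finrank K V) :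
    ∃ z, f z = 0 ∧ z ≠ 0 :=
  (Submodule.ne_bot_iff _).mp (ker_ne_bot_of_finrank_lt h)

theorem stmt7_general {m N : ℕ} (hmN : m < N)
    (A : Matrix (Fin m) (Fin N) ℂ)
    -- `n1` is an arbitrary norm on `ℂ^N`
    (n1 : EuclideanSpace ℂ (Fin N) → ℝ)
    (hn1_tri : ∀ a b, n1 (a + b) ≤ n1 a + n1 b)
    (hn1_smul : ∀ (c : ℂ) a, n1 (c • a) = ‖c‖ * n1 a)
    (hn1_eq : ∀ a, n1 a = 0 ↔ a = 0)
    (δ : ℝ) (hδ : δ ≤ 1 / 5) :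
    ∃ M₁ T : Set (EuclideanSpace ℂ (Fin N)),
      M₁.Finite ∧ T ⊆ M₁ ∧
      -- `M₁` is contained in the closed unit ball
      (∀ x ∈ M₁, n1 x ≤ 1) ∧
      -- (a) the optimality constant satisfies `c_opt(A, M₁) ≤ 1/4`
      (∃ φ : EuclideanSpace ℂ (Fin m) → EuclideanSpace ℂ (Fin N),
        ∀ x ∈ M₁, n1 (φ (Matrix.toEuclideanLin A x) - x) ≤ 1 / 4) ∧
      -- (b) any map performing `δ`-well on the training set `T` makes error `≥ 3/10` on `M₁`
      (∀ Ψ : EuclideanSpace ℂ (Fin m) → EuclideanSpace ℂ (Fin N),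
        (∀ x ∈ T, n1 (Ψ (Matrix.toEuclideanLin A x) - x) ≤ δ) →
        ∃ x ∈ M₁, 3 / 10 ≤ n1 (Ψ (Matrix.toEuclideanLin A x) - x)) := by
  let p : Seminorm ℂ (EuclideanSpace ℂ (Fin N)) := .of n1 hn1_tri hn1_smul
  let f := Matrix.toEuclideanLin A
  obtain ⟨z₀, hz₀, hz₀_ne⟩ : ∃ z₀, f z₀ = 0 ∧ z₀ ≠ 0 :=
    f.exists_mem_ker_ne_zero_of_finrank_lt (by simpa using hmN)
  obtain ⟨c, hz⟩ :=
    p.exists_smul_eq_of_ne_zero (r := 1 / 2) (mt (hn1_eq z₀).mp hz₀_ne) (by norm_num)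
  set z := c • z₀
  have hfz : f z = f 0 := by simp only [z, map_smul, hz₀, smul_zero, map_zero]
  refine ⟨{0, z}, {0}, by simp, by simp, ?_, ⟨fun _ ↦ (2⁻¹ : ℂ) • z, fun x hx ↦ ?_⟩, ?_⟩
  · rintro x (rfl | rfl)
    · exact (map_zero p).trans_le zero_le_one
    · exact hz.trans_le (by norm_num)
  · exact (p.map_half_smul_sub_of_mem_pair hx).trans_le (by rw [hz]; norm_num)
  · intro Ψ hΨ
    refine ⟨z, by simp, ?_⟩
    have h0 : p (Ψ (f 0) - 0) ≤ δ := hΨ 0 rfl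
    have herr := p.sub_map_sub_le_map_sub_of_eq Ψ f hfz
    rw [hz] at herr
    change 3 / 10 ≤ p (Ψ (f z) - z)
    linarith

theorem stmt7 {m N : ℕ} (hmN : m < N)
    (A : Matrix (Fin m) (Fin N) ℂ) (hrank : 1 ≤ A.rank)
    -- `n1` is an arbitrary norm on `ℂ^N`
    (n1 : EuclideanSpace ℂ (Fin N) → ℝ)
    (hn1_tri : ∀ a b, n1 (a + b) ≤ n1 a + n1 b)
    (hn1_smul : ∀ (c : ℂ) a, n1 (c • a) = ‖c‖ * n1 a)
    (hn1_eq : ∀ a, n1 a = 0 ↔ a = 0)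
    (δ : ℝ) (hδ : δ ≤ 1 / 5) :
    ∃ M₁ T : Set (EuclideanSpace ℂ (Fin N)),
      M₁.Finite ∧ T ⊆ M₁ ∧
      -- `M₁` is contained in the closed unit ball
      (∀ x ∈ M₁, n1 x ≤ 1) ∧
      -- (a) the optimality constant satisfies `c_opt(A, M₁) ≤ 1/4`
      (∃ φ : EuclideanSpace ℂ (Fin m) → EuclideanSpace ℂ (Fin N),
        ∀ x ∈ M₁, n1 (φ (Matrix.toEuclideanLin A x) - x) ≤ 1 / 4) ∧
      -- (b) any map performing `δ`-well on the training set `T` makes error `≥ 3/10` on `M₁`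
      (∀ Ψ : EuclideanSpace ℂ (Fin m) → EuclideanSpace ℂ (Fin N),
        (∀ x ∈ T, n1 (Ψ (Matrix.toEuclideanLin A x) - x) ≤ δ) →
        ∃ x ∈ M₁, 3 / 10 ≤ n1 (Ψ (Matrix.toEuclideanLin A x) - x)) :=
  stmt7_general hmN A n1 hn1_tri hn1_smul hn1_eq δ hδ
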